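/- arXiv:0907.4340 — 2 statements merged into one kernel-verified Lean document; each statement's English description precedes it below -/
import Mathlib

section
/- A left-invariant total order ≼ on a group G is Conradian if and only if the action of G on itself by left translations (with the ordered set (G, ≼)) admits no crossing. -/
/-!
If `1 < f, g` and `f * g ^ n ≤ g` for all `n > 0`, then `(f, g, 1, f⁻¹ * g, f * g)` is a
crossing.
Conversely, conjugating a crossing by `u⁻¹` moves `u` to `1`, and passing to the powers
`a = f ^ N, b = g ^ M` gives `a * v < b`, `1 < a ^ 2 * v` and `b ^ n < v` for all `n`.
Then `1 < a * b`, and the Conradian property yields `m` with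
`b < a * b * b ^ m = a * b ^ (m + 1) < a * v < b`.
-/

def IsConradian (G : Type*) [Monoid G] [LT G] : Prop :=
  ∀ f g : G, 1 < f → 1 < g → ∃ n : ℕ, 0 < n ∧ g < f * g ^ n

def IsCrossing {G Ω : Type*} [Monoid G] [MulAction G Ω] [LT Ω] (f g : G) (u v w : Ω) : Prop :=
  (u < w ∧ w < v) ∧ (∀ n : ℕ, g ^ n • u < v ∧ u < f ^ n • v) ∧
    ∃ M N : ℕ, f ^ N • v < w ∧ w < g ^ M • u

section

variable {G : Type*} [Group G] [LinearOrder G] [MulLeftMono G]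

theorem IsCrossing.conj {f g u v w : G} (h : IsCrossing f g u v w) (c : G) :
    IsCrossing (c * f * c⁻¹) (c * g * c⁻¹) (c * u) (c * v) (c * w) := by
  have conj_smul : ∀ (x y : G) (n : ℕ), (c * x * c⁻¹) ^ n • (c * y) = c * (x ^ n * y) := by
    intro x y n
    rw [conj_pow, smul_eq_mul]
    group
  obtain ⟨⟨huw, hwv⟩, hpow, M, N, hfv, hgu⟩ := h
  refine ⟨⟨mul_lt_mul_right huw c, mul_lt_mul_right hwv c⟩, fun n => ?_, M, N, ?_, ?_⟩
  · rw [conj_smul, conj_smul]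
    exact ⟨mul_lt_mul_right (hpow n).1 c, mul_lt_mul_right (hpow n).2 c⟩
  · rw [conj_smul]
    exact mul_lt_mul_right hfv c
  · rw [conj_smul]
    exact mul_lt_mul_right hgu c

theorem IsConradian.exists_le_pow (hC : IsConradian G) {a b v : G} (hb : 1 < b)
    (ha : 1 < a ^ 2 * v) (hab : a * v < b) : ∃ n : ℕ, v ≤ b ^ n := by
  by_contra! hv
  have hab₁ : 1 < a * b := by
    refine inv_lt_iff_one_lt_mul'.1 (lt_trans ?_ hab)
    simpa [pow_two, mul_assoc] using mul_lt_mul_right ha a⁻¹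
  obtain ⟨m, -, hm⟩ := hC (a * b) b hab₁ hb
  refine hm.not_gt ?_
  calc a * b * b ^ m = a * b ^ (m + 1) := by rw [mul_assoc, pow_succ']
    _ < a * v := mul_lt_mul_right (hv _) a
    _ < b := hab

theorem IsConradian.not_isCrossing_one (hC : IsConradian G) (f g v w : G) :
    ¬ IsCrossing f g 1 v w := by
  rintro ⟨⟨hw, -⟩, hpow, M, N, hfv, hgw⟩
  simp only [smul_eq_mul, mul_one] at hpow hfv hgw
  obtain ⟨n, hn⟩ := hC.exists_le_pow (a := f ^ N) (b := g ^ M) (hw.trans hgw)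
    (by simpa [← pow_mul] using (hpow (N * 2)).2) (hfv.trans hgw)
  exact hn.not_gt (by simpa [← pow_mul] using (hpow (M * n)).1)

theorem IsConradian.not_isCrossing (hC : IsConradian G) (f g u v w : G) :
    ¬ IsCrossing f g u v w := fun h => by
  have h₁ := h.conj u⁻¹
  rw [inv_mul_cancel] at h₁
  exact hC.not_isCrossing_one _ _ _ _ h₁

theorem isCrossing_of_forall_mul_pow_le {f g : G} (hf : 1 < f) (hg : 1 < g)
    (h : ∀ n : ℕ, 0 < n → f * g ^ n ≤ g) : IsCrossing f g 1 (f⁻¹ * g) (f * g) := by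
  have hlt : ∀ n : ℕ, f * g ^ n < g := fun n => calc
    f * g ^ n < f * g ^ (n + 1) := by
      rw [pow_succ]
      exact mul_lt_mul_right (lt_mul_of_one_lt_right' _ hg) f
    _ ≤ g := h (n + 1) n.succ_pos
  have hfg : f * g < g := by simpa using hlt 1
  have hffg : f * (f * g) < f * g := mul_lt_mul_right hfg f
  refine ⟨⟨hf.trans (lt_mul_of_one_lt_right' f hg), lt_inv_mul_iff_mul_lt.2 (hffg.trans hfg)⟩,
    fun n => ⟨?_, ?_⟩, 1, 3, ?_, ?_⟩
  all_goals simp only [smul_eq_mul, mul_one, pow_one]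
  · exact lt_inv_mul_iff_mul_lt.2 (hlt n)
  · cases n with
    | zero =>
      rw [pow_zero, one_mul]
      exact lt_inv_mul_iff_mul_lt.2 (by simpa using hlt 0)
    | succ k =>
      rw [pow_succ, mul_assoc, mul_inv_cancel_left]
      exact one_lt_mul_of_le_of_lt' (one_le_pow_of_one_le' hf.le k) hg
  · rwa [pow_succ', pow_two, mul_assoc, mul_assoc, mul_inv_cancel_left]
  · exact hfg

end

/-- A left-invariant total order on G is Conradian iff the action of G on
itself by left translations (on the ordered set (G, ≼)) admits no crossing. -/
theorem conradian_iff_no_crossing {G : Type*} [Group G] [LinearOrder G]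
    (hleft : ∀ f a b : G, a ≤ b → f * a ≤ f * b) :
    (∀ f g : G, 1 < f → 1 < g → ∃ n : ℕ, 0 < n ∧ g < f * g ^ n) ↔
      ¬ ∃ f g u v w : G, (u < w ∧ w < v) ∧
        (∀ n : ℕ, g ^ n * u < v ∧ u < f ^ n * v) ∧
        (∃ M N : ℕ, f ^ N * v < w ∧ w < g ^ M * u) := by
  have : MulLeftMono G := ⟨fun f _ _ h => hleft f _ _ h⟩
  refine ⟨fun hC ⟨f, g, u, v, w, h⟩ => IsConradian.not_isCrossing hC f g u v w h,
    fun hN f g hf hg => ?_⟩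
  by_contra! hle
  exact hN ⟨f, g, 1, f⁻¹ * g, f * g, isCrossing_of_forall_mul_pow_le hf hg hle⟩
end

section
/- In a Conradian-orderable group G, the intersection of any family of C-relatively convex subgroups is C-relatively convex. -/
section
variable {G : Type*} [Group G]

/-- A left-invariant total order on G, given as a relation. -/
def IsLeftTotalOrder (le : G → G → Prop) : Prop :=
  (∀ a, le a a) ∧ (∀ a b c, le a b → le b c → le a c) ∧
  (∀ a b, le a b → le b a → a = b) ∧ (∀ a b, le a b ∨ le b a) ∧
  (∀ f a b, le a b → le (f * a) (f * b))

/-- The strict relation associated to `le`. -/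
def clt (le : G → G → Prop) (a b : G) : Prop := le a b ∧ ¬ le b a

/-- A Conradian (C-)ordering on G. -/
def IsConradianOrder (le : G → G → Prop) : Prop :=
  IsLeftTotalOrder le ∧
  ∀ f g : G, clt le 1 f → clt le 1 g → ∃ n : ℕ, 0 < n ∧ clt le g (f * g ^ n)

/-- `H` is convex for the left-order `le`. -/
def IsConvexFor (le : G → G → Prop) (H : Subgroup G) : Prop :=
  ∀ f₁ f₂ h : G, f₁ ∈ H → f₂ ∈ H → clt le f₁ h → clt le h f₂ → h ∈ H

/-- `H` is C-relatively convex: convex for some Conradian order on G. -/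
def CRelativelyConvex (H : Subgroup G) : Prop :=
  ∃ le : G → G → Prop, IsConradianOrder le ∧ IsConvexFor le H

end

/-!
Well-order the index set and append one last level: the trivial subgroup, with a Conradian order
of `G`. Every `x ≠ 1` then leaves the family at a first level `j`, and `x` is declared positive
when it is positive for the order `Lⱼ` in which `Hⱼ` is convex. Convexity means that the sign of
an element outside `Hⱼ` does not change under multiplication by elements of `Hⱼ` on either side;
this is what makes the resulting positive cone closed under products and Conradian. An element
lying between two elements of `⋂ Hᵢ` but leaving the family at level `j` would lie between two
elements of `Hⱼ` for `Lⱼ`, hence in `Hⱼ`.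
-/

section

variable {G : Type*} [Group G]

structure IsPositiveCone (P : G → Prop) : Prop where
  mul : ∀ x y, P x → P y → P (x * y)
  not_inv : ∀ x, P x → ¬ P x⁻¹
  total : ∀ x, x ≠ 1 → P x ∨ P x⁻¹

def coneLE (P : G → Prop) (a b : G) : Prop := a⁻¹ * b = 1 ∨ P (a⁻¹ * b)

theorem pos_of_clt_coneLE {P : G → Prop} {a b : G} (h : clt (coneLE P) a b) : P (a⁻¹ * b) :=
  h.1.resolve_left fun h₁ => h.2 (Or.inl (by simpa using congrArg (·⁻¹) h₁))

namespace IsPositiveCone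

variable {P : G → Prop}

theorem not_one (hP : IsPositiveCone P) : ¬ P 1 := fun h => hP.not_inv 1 h (by simpa using h)

theorem clt_coneLE_iff (hP : IsPositiveCone P) {a b : G} :
    clt (coneLE P) a b ↔ P (a⁻¹ * b) := by
  refine ⟨pos_of_clt_coneLE, fun h => ⟨Or.inr h, ?_⟩⟩
  rw [coneLE, show b⁻¹ * a = (a⁻¹ * b)⁻¹ by group, inv_eq_one]
  rintro (h' | h')
  exacts [hP.not_one (h' ▸ h), hP.not_inv _ h h']

theorem isLeftTotalOrder (hP : IsPositiveCone P) : IsLeftTotalOrder (coneLE P) := by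
  have hsplit : ∀ a b c : G, a⁻¹ * c = a⁻¹ * b * (b⁻¹ * c) := by intros; group
  have hflip : ∀ a b : G, b⁻¹ * a = (a⁻¹ * b)⁻¹ := by intros; group
  refine ⟨fun a => Or.inl (inv_mul_cancel a), fun a b c hab hbc => ?_, fun a b hab hba => ?_,
    fun a b => ?_, fun f a b hab => ?_⟩
  · rw [coneLE, hsplit a b c]
    rcases hab with hab | hab <;> rcases hbc with hbc | hbc
    · simp [hab, hbc]
    · simpa [hab] using Or.inr hbc
    · simpa [hbc] using Or.inr hab
    · exact Or.inr (hP.mul _ _ hab hbc)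
  · rw [coneLE, hflip a b, inv_eq_one] at hba
    rcases hab with hab | hab
    · exact inv_mul_eq_one.1 hab
    · rcases hba with hba | hba
      · exact absurd (hba ▸ hab) hP.not_one
      · exact absurd hba (hP.not_inv _ hab)
  · rw [coneLE, coneLE, hflip a b, inv_eq_one]
    by_cases h : a⁻¹ * b = 1
    · exact Or.inl (Or.inl h)
    · rcases hP.total _ h with h' | h'
      exacts [Or.inl (Or.inr h'), Or.inr (Or.inr h')]
  · simpa [coneLE, mul_assoc] using hab

theorem isConradianOrder (hP : IsPositiveCone P)
    (hconr : ∀ f g, P f → P g → ∃ n, 0 < n ∧ P (g⁻¹ * (f * g ^ n))) :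
    IsConradianOrder (coneLE P) := by
  refine ⟨hP.isLeftTotalOrder, fun f g hf hg => ?_⟩
  rw [hP.clt_coneLE_iff, inv_one, one_mul] at hf hg
  simpa only [hP.clt_coneLE_iff] using hconr f g hf hg

end IsPositiveCone

namespace IsLeftTotalOrder

variable {le : G → G → Prop}

theorem clt_trans (hle : IsLeftTotalOrder le) {a b c : G} (hab : clt le a b) (hbc : clt le b c) :
    clt le a c :=
  ⟨hle.2.1 _ _ _ hab.1 hbc.1, fun hca => hbc.2 (hle.2.1 _ _ _ hca hab.1)⟩

theorem clt_of_not_clt (hle : IsLeftTotalOrder le) {a b : G} (hne : a ≠ b) (h : ¬ clt le a b) :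
    clt le b a := by
  rcases hle.2.2.2.1 a b with hab | hba
  · exact absurd ⟨hab, fun hba => hne (hle.2.2.1 _ _ hab hba)⟩ h
  · exact ⟨hba, fun hab => hne (hle.2.2.1 _ _ hab hba)⟩

theorem clt_mul_left (hle : IsLeftTotalOrder le) (f : G) {a b : G} (hab : clt le a b) :
    clt le (f * a) (f * b) := by
  refine ⟨hle.2.2.2.2 f a b hab.1, fun hba => hab.2 ?_⟩
  simpa using hle.2.2.2.2 f⁻¹ _ _ hba

theorem clt_iff_one_clt (hle : IsLeftTotalOrder le) {a b : G} :
    clt le a b ↔ clt le 1 (a⁻¹ * b) := by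
  refine ⟨fun h => ?_, fun h => ?_⟩
  · simpa using hle.clt_mul_left a⁻¹ h
  · simpa using hle.clt_mul_left a h

theorem one_clt_mul (hle : IsLeftTotalOrder le) {x y : G} (hx : clt le 1 x) (hy : clt le 1 y) :
    clt le 1 (x * y) :=
  hle.clt_trans hx (by simpa using hle.clt_mul_left x hy)

theorem inv_clt_one (hle : IsLeftTotalOrder le) {x : G} (hx : clt le 1 x) : clt le x⁻¹ 1 := by
  simpa using hle.clt_mul_left x⁻¹ hx

theorem isPositiveCone (hle : IsLeftTotalOrder le) : IsPositiveCone (clt le 1) where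
  mul _ _ := hle.one_clt_mul
  not_inv _ hx hx' := hx'.2 (hle.inv_clt_one hx).1
  total x hx := by
    by_cases h : clt le 1 x
    · exact Or.inl h
    · exact Or.inr (by simpa using hle.clt_iff_one_clt.1 (hle.clt_of_not_clt (Ne.symm hx) h))

end IsLeftTotalOrder

namespace IsConvexFor

variable {le : G → G → Prop} {H : Subgroup G}

theorem one_clt_mul_right (hH : IsConvexFor le H) (hle : IsLeftTotalOrder le) {x b : G}
    (hx : clt le 1 x) (hxH : x ∉ H) (hb : b ∈ H) : clt le 1 (x * b) := by
  refine hle.clt_of_not_clt (fun h => hxH ?_) fun hxb => hxH ?_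
  · exact eq_inv_of_mul_eq_one_left h ▸ inv_mem hb
  · have hbx : clt le b x⁻¹ := by simpa using hle.clt_mul_left x⁻¹ hxb
    simpa using inv_mem (hH b 1 x⁻¹ hb (one_mem H) hbx (hle.inv_clt_one hx))

theorem one_clt_mul_left (hH : IsConvexFor le H) (hle : IsLeftTotalOrder le) {x a : G}
    (hx : clt le 1 x) (hxH : x ∉ H) (ha : a ∈ H) : clt le 1 (a * x) := by
  refine hle.clt_of_not_clt (fun h => hxH ?_) fun hax => hxH ?_
  · exact eq_inv_of_mul_eq_one_right h ▸ inv_mem ha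
  · have hxa : clt le x a⁻¹ := by simpa using hle.clt_mul_left a⁻¹ hax
    exact hH 1 a⁻¹ x (one_mem H) (inv_mem ha) hx hxa

theorem mul_notMem (hH : IsConvexFor le H) (hle : IsLeftTotalOrder le) {w g : G}
    (hw : clt le 1 w) (hg : clt le 1 g) (hgH : g ∉ H) : w * g ∉ H := by
  intro hwg
  have hw_lt : clt le w (w * g) := by simpa using hle.clt_mul_left w hg
  have hwH : w ∈ H := hH 1 (w * g) w (one_mem H) hwg hw hw_lt
  exact hgH (by simpa using mul_mem (inv_mem hwH) hwg)

theorem exists_pow_notMem (hH : IsConvexFor le H) (hle : IsConradianOrder le) {f g : G}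
    (hg : clt le 1 g) (hgH : g ∉ H) (hfg : clt le 1 (f * g)) :
    ∃ n, 0 < n ∧ clt le 1 (g⁻¹ * (f * g ^ n)) ∧ g⁻¹ * (f * g ^ n) ∉ H := by
  obtain ⟨m, -, hm⟩ := hle.2 (f * g) g hfg hg
  have hw : clt le 1 (g⁻¹ * (f * g * g ^ m)) := hle.1.clt_iff_one_clt.1 hm
  -- one more factor `g ∉ H` pushes the positive element out of `H`
  have hshift : g⁻¹ * (f * g ^ (m + 2)) = g⁻¹ * (f * g * g ^ m) * g := by group
  exact ⟨m + 2, by omega, hshift ▸ hle.1.one_clt_mul hw hg, hshift ▸ hH.mul_notMem hle.1 hw hg hgH⟩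

end IsConvexFor

theorem isConvexFor_bot (le : G → G → Prop) : IsConvexFor le ⊥ := by
  intro f₁ f₂ h hf₁ hf₂ h₁ h₂
  rw [Subgroup.mem_bot] at hf₁ hf₂
  subst hf₁ hf₂
  exact absurd h₂.1 h₁.2

section Lex

variable {κ : Type*} [LinearOrder κ] (H : κ → Subgroup G) (L : κ → G → G → Prop)

def IsFirstExit (x : G) (j : κ) : Prop := x ∉ H j ∧ ∀ i < j, x ∈ H i

def lexCone (x : G) : Prop := ∃ j, IsFirstExit H x j ∧ clt (L j) 1 x

variable {H L}

theorem IsFirstExit.unique {x : G} {j k : κ} (hj : IsFirstExit H x j) (hk : IsFirstExit H x k) :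
    j = k := by
  rcases lt_trichotomy j k with h | h | h
  exacts [absurd (hk.2 j h) hj.1, h, absurd (hj.2 k h) hk.1]

theorem exists_isFirstExit [WellFoundedLT κ] {x : G} (hx : ∃ j, x ∉ H j) :
    ∃ j, IsFirstExit H x j := by
  obtain ⟨j, hj, hmin⟩ := WellFounded.has_min wellFounded_lt {j | x ∉ H j} hx
  exact ⟨j, hj, fun i hi => not_not.1 fun hxi => hmin i hxi hi⟩

theorem isFirstExit_inv {x : G} {j : κ} : IsFirstExit H x⁻¹ j ↔ IsFirstExit H x j := by
  simp only [IsFirstExit, inv_mem_iff]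

theorem IsFirstExit.mul_right {x b : G} {j : κ} (hx : IsFirstExit H x j)
    (hb : ∀ i ≤ j, b ∈ H i) : IsFirstExit H (x * b) j :=
  ⟨fun h => hx.1 (by simpa using mul_mem h (inv_mem (hb j le_rfl))),
    fun i hi => mul_mem (hx.2 i hi) (hb i hi.le)⟩

theorem IsFirstExit.mul_left {x a : G} {j : κ} (hx : IsFirstExit H x j)
    (ha : ∀ i ≤ j, a ∈ H i) : IsFirstExit H (a * x) j :=
  ⟨fun h => hx.1 (by simpa using mul_mem (inv_mem (ha j le_rfl)) h),
    fun i hi => mul_mem (ha i hi.le) (hx.2 i hi)⟩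

theorem IsFirstExit.lexCone_iff {x : G} {j : κ} (hx : IsFirstExit H x j) :
    lexCone H L x ↔ clt (L j) 1 x :=
  ⟨fun ⟨_, hk, hpos⟩ => hk.unique hx ▸ hpos, fun hpos => ⟨j, hx, hpos⟩⟩

theorem lexCone_mul (hL : ∀ j, IsLeftTotalOrder (L j)) (hH : ∀ j, IsConvexFor (L j) (H j))
    {x y : G} (hx : lexCone H L x) (hy : lexCone H L y) : lexCone H L (x * y) := by
  obtain ⟨j, hxj, hxpos⟩ := hx
  obtain ⟨k, hyk, hypos⟩ := hy
  rcases lt_trichotomy j k with hjk | rfl | hkj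
  · exact ⟨j, hxj.mul_right fun i hi => hyk.2 i (hi.trans_lt hjk),
      (hH j).one_clt_mul_right (hL j) hxpos hxj.1 (hyk.2 j hjk)⟩
  · exact ⟨j, ⟨(hH j).mul_notMem (hL j) hxpos hypos hyk.1,
      fun i hi => mul_mem (hxj.2 i hi) (hyk.2 i hi)⟩, (hL j).one_clt_mul hxpos hypos⟩
  · exact ⟨k, hyk.mul_left fun i hi => hxj.2 i (hi.trans_lt hkj),
      (hH k).one_clt_mul_left (hL k) hypos hyk.1 (hxj.2 k hkj)⟩

theorem isPositiveCone_lexCone [WellFoundedLT κ] (hL : ∀ j, IsLeftTotalOrder (L j))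
    (hH : ∀ j, IsConvexFor (L j) (H j)) (hbot : ∀ x, (∀ j, x ∈ H j) → x = 1) :
    IsPositiveCone (lexCone H L) where
  mul _ _ := lexCone_mul hL hH
  not_inv x := by
    rintro ⟨j, hxj, hpos⟩ hinv
    exact (hL j).isPositiveCone.not_inv x hpos ((isFirstExit_inv.2 hxj).lexCone_iff.1 hinv)
  total x hx := by
    obtain ⟨j, hxj⟩ := exists_isFirstExit (not_forall.1 (mt (hbot x) hx))
    rcases (hL j).isPositiveCone.total x hx with hpos | hpos
    exacts [Or.inl ⟨j, hxj, hpos⟩, Or.inr ⟨j, isFirstExit_inv.2 hxj, hpos⟩]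

theorem exists_pow_lexCone (hL : ∀ j, IsConradianOrder (L j)) (hH : ∀ j, IsConvexFor (L j) (H j))
    {f g : G} (hf : lexCone H L f) (hg : lexCone H L g) :
    ∃ n, 0 < n ∧ lexCone H L (g⁻¹ * (f * g ^ n)) := by
  obtain ⟨j, hfj, hfpos⟩ := hf
  obtain ⟨k, hgk, hgpos⟩ := hg
  rcases lt_or_ge j k with hjk | hkj
  · -- `g` lies in `H j`, so conjugating by it keeps `f` at level `j`
    have hg_le : ∀ i ≤ j, g ∈ H i := fun i hi => hgk.2 i (hi.trans_lt hjk)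
    have hfg := (hH j).one_clt_mul_right (hL j).1 hfpos hfj.1 (hg_le j le_rfl)
    refine ⟨1, one_pos, j, ?_, ?_⟩ <;> rw [pow_one]
    · exact (hfj.mul_right hg_le).mul_left fun i hi => inv_mem (hg_le i hi)
    · exact (hH j).one_clt_mul_left (hL j).1 hfg (hfj.mul_right hg_le).1 (inv_mem (hg_le j le_rfl))
  · have hfg : clt (L k) 1 (f * g) := by
      rcases hkj.lt_or_eq with hkj | rfl
      · exact (hH k).one_clt_mul_left (hL k).1 hgpos hgk.1 (hfj.2 k hkj)
      · exact (hL k).1.one_clt_mul hfpos hgpos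
    obtain ⟨n, hn, hpos, hnotMem⟩ := (hH k).exists_pow_notMem (hL k) hgpos hgk.1 hfg
    refine ⟨n, hn, k, ⟨hnotMem, fun i hi => ?_⟩, hpos⟩
    have hfi := hfj.2 i (hi.trans_le hkj)
    exact mul_mem (inv_mem (hgk.2 i hi)) (mul_mem hfi (pow_mem (hgk.2 i hi) n))

theorem isConvexFor_lexCone [WellFoundedLT κ] (hL : ∀ j, IsLeftTotalOrder (L j))
    (hH : ∀ j, IsConvexFor (L j) (H j)) (j : κ) :
    IsConvexFor (coneLE (lexCone H L)) (⨅ (i) (_ : i < j), H i) := by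
  intro f₁ f₂ h hf₁ hf₂ h₁ h₂
  simp only [Subgroup.mem_iInf] at hf₁ hf₂ ⊢
  by_contra! ⟨i₀, hi₀j, hi₀⟩
  obtain ⟨k, hk⟩ := exists_isFirstExit ⟨i₀, hi₀⟩
  have hkj : k < j := (not_lt.1 fun h => hi₀ (hk.2 i₀ h)).trans_lt hi₀j
  have hf₁k : ∀ i ≤ k, f₁ ∈ H i := fun i hi => hf₁ i (hi.trans_lt hkj)
  have hf₂k : ∀ i ≤ k, f₂ ∈ H i := fun i hi => hf₂ i (hi.trans_lt hkj)
  -- both comparisons are decided by the order `L k`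
  have h₁k : clt (L k) f₁ h := (hL k).clt_iff_one_clt.2 <|
    (hk.mul_left fun i hi => inv_mem (hf₁k i hi)).lexCone_iff.1 (pos_of_clt_coneLE h₁)
  have h₂k : clt (L k) h f₂ := (hL k).clt_iff_one_clt.2 <|
    ((isFirstExit_inv.2 hk).mul_right hf₂k).lexCone_iff.1 (pos_of_clt_coneLE h₂)
  exact hk.1 (hH k f₁ f₂ h (hf₁k k le_rfl) (hf₂k k le_rfl) h₁k h₂k)

end Lex

theorem CRelativelyConvex.iInf_of_wellFoundedLT {κ : Type*} [LinearOrder κ]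
    [WellFoundedLT κ] (hCO : ∃ le : G → G → Prop, IsConradianOrder le) (H : κ → Subgroup G)
    (hH : ∀ i, CRelativelyConvex (H i)) : CRelativelyConvex (⨅ i, H i) := by
  obtain ⟨le₀, hle₀⟩ := hCO
  choose L hL using hH
  -- a last level, ordered by `le₀`, separates the elements of the intersection
  let H' : WithTop κ → Subgroup G := WithTop.recTopCoe ⊥ H
  let L' : WithTop κ → G → G → Prop := WithTop.recTopCoe le₀ L
  have hL' : ∀ j, IsConradianOrder (L' j) := WithTop.recTopCoe hle₀ fun i => (hL i).1
  have hH' : ∀ j, IsConvexFor (L' j) (H' j) :=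
    WithTop.recTopCoe (isConvexFor_bot le₀) fun i => (hL i).2
  have hbot : ∀ x, (∀ j, x ∈ H' j) → x = 1 := fun x hx => Subgroup.mem_bot.1 (hx ⊤)
  have hP := isPositiveCone_lexCone (fun j => (hL' j).1) hH' hbot
  have hiInf : ⨅ i, H i = ⨅ (j) (_ : j < ⊤), H' j := by
    ext x
    simp [Subgroup.mem_iInf, WithTop.forall, H']
  refine ⟨coneLE (lexCone H' L'), hP.isConradianOrder fun f g => exists_pow_lexCone hL' hH', ?_⟩
  rw [hiInf]
  exact isConvexFor_lexCone (fun j => (hL' j).1) hH' ⊤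

end

/-- In a Conradian-orderable group, the intersection of any family of
C-relatively convex subgroups is C-relatively convex. -/
theorem iInf_CRelativelyConvex {G : Type*} [Group G]
    (hCO : ∃ le : G → G → Prop, IsConradianOrder le)
    {ι : Sort*} (H : ι → Subgroup G) (hH : ∀ i, CRelativelyConvex (H i)) :
    CRelativelyConvex (⨅ i, H i) := by
  obtain ⟨_, _⟩ := exists_wellFoundedLT (PLift ι)
  rw [← iInf_plift_down]
  exact CRelativelyConvex.iInf_of_wellFoundedLT hCO _ fun i => hH i.down
end
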